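/- Let λ₁ > λ₂ ≥ 1 be integers and d = λ₁ + λ₂. Define ring homomorphisms q_λ : ℂ[α₁,…,α_d] → ℂ[ξ,η] by sending α_j to the coefficient of t^{d−j} in the polynomial (t+ξ)^{λ₁}·(t+η)^{λ₂} ∈ ℂ[ξ,η][t], and q_{(d)} : ℂ[α₁,…,α_d] → ℂ[ξ] by α_j ↦ binom(d,j)·ξ^j (the coefficient of t^{d−j} in (t+ξ)^d). Let I_{(d)} = ker q_{(d)}. Then the image q_λ(I_{(d)}) of the ideal I_{(d)} under q_λ equals, as a set, the ideal (ξ−η)²·ℂ[ξ,η] generated by (ξ−η)² in ℂ[ξ,η]. -/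

import Mathlib

open MvPolynomial

/-- The binary form `(t+ξ)^{λ₁}·(t+η)^{λ₂}`, as a polynomial in `t` with coefficients in
`ℂ[ξ,η]`; here `ξ`, `η` are the variables `0`, `1` of `MvPolynomial (Fin 2) ℂ`. -/
noncomputable def paramPoly (lam₁ lam₂ : ℕ) : Polynomial (MvPolynomial (Fin 2) ℂ) :=
  (Polynomial.X + Polynomial.C (MvPolynomial.X 0)) ^ lam₁ *
    (Polynomial.X + Polynomial.C (MvPolynomial.X 1)) ^ lam₂

/-- The coordinate-ring map `q_λ : ℂ[α₁,…,α_d] → ℂ[ξ,η]` of the parametrization of binary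
forms with roots of multiplicities `λ₁`, `λ₂`; the variable `j : Fin d` stands for
`α_{j+1}` and is sent to the coefficient of `t^{d−(j+1)}` in `(t+ξ)^{λ₁}(t+η)^{λ₂}`. -/
noncomputable def qLam (d lam₁ lam₂ : ℕ) :
    MvPolynomial (Fin d) ℂ →ₐ[ℂ] MvPolynomial (Fin 2) ℂ :=
  MvPolynomial.aeval fun j : Fin d => (paramPoly lam₁ lam₂).coeff (d - ((j : ℕ) + 1))

/-- The coordinate-ring map `q_{(d)} : ℂ[α₁,…,α_d] → ℂ[ξ]` of the rational normal curve;
the variable `j : Fin d` stands for `α_{j+1}` and is sent to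
`binom(d,j+1)·ξ^{j+1}`, the coefficient of `t^{d−(j+1)}` in `(t+ξ)^d`. -/
noncomputable def qRNC (d : ℕ) : MvPolynomial (Fin d) ℂ →ₐ[ℂ] Polynomial ℂ :=
  MvPolynomial.aeval fun j : Fin d =>
    Polynomial.C ((d.choose ((j : ℕ) + 1) : ℂ)) * Polynomial.X ^ ((j : ℕ) + 1)

/-!
Write `u = ξ - η`, `d = λ₁ + λ₂` and `ζ = (λ₁ξ + λ₂η)/d`. Since `ξ = ζ + (λ₂/d)u`,
`η = ζ - (λ₁/d)u` and `u² ≡ 0`, the binomial expansion to first order shows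
`(t+ξ)^{λ₁}(t+η)^{λ₂} ≡ (t+ζ)^d (mod u²)`, i.e. `q_λ ≡ ψ ∘ q_{(d)}` for `ψ : ξ ↦ ζ`.
Hence `q_λ(I_{(d)}) ⊆ (u²)`; and as `ψ` stays injective modulo `u²` (specialise `ξ = η`),
any `f` with `q_λ f ∈ (u²)` lies in `I_{(d)}`.

It remains to see that `(u²)` lies in the image of `q_λ`. The image is generated by the
elementary symmetric functions of the roots `ξ,…,ξ,η,…,η`, so it contains every symmetric
function of them, in particular the power sums `p_k = λ₁ξ^k + λ₂η^k`. From `p₁, p₂, p₃` one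
gets `u²` and, since `λ₁ ≠ λ₂`, `u³`. As `ξ, η ∈ ℂ p₁ + ℂ u`, every polynomial is `a + b u`
with `a, b` in the image, and `u² (a + b u) = u² a + u³ b`.
-/

theorem add_pow_of_sq_eq_zero {R : Type*} [CommRing R] (y t : R) (ht : t ^ 2 = 0) (n : ℕ) :
    (y + t) ^ n = y ^ n + n * y ^ (n - 1) * t := by
  simpa [Polynomial.derivative_X_pow] using
    Polynomial.eval_add_of_sq_eq_zero (Polynomial.X ^ n) y t ht

theorem add_mul_pow_mul_add_mul_pow_of_sq_eq_zero {R : Type*} [CommRing R] (y a b w : R)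
    (hw : w ^ 2 = 0) {m n : ℕ} (hmn : m * a + n * b = 0) :
    (y + a * w) ^ m * (y + b * w) ^ n = y ^ (m + n) := by
  have hsq (c : R) : (c * w) ^ 2 = 0 := by rw [mul_pow, hw, mul_zero]
  rw [add_pow_of_sq_eq_zero _ _ (hsq a), add_pow_of_sq_eq_zero _ _ (hsq b)]
  rcases m with _ | m <;> rcases n with _ | n <;> push_cast at hmn ⊢
  · simp
  · linear_combination (y ^ n * w) * hmn
  · linear_combination (y ^ m * w) * hmn
  · linear_combination
      (y ^ (m + n + 1) * w) * hmn + ((m + 1) * (n + 1) * y ^ (m + n) * a * b) * hw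

theorem aeval_mem_range_aeval_esymm {σ R S : Type*} [CommRing R] [CommRing S] [Algebra R S]
    [Fintype σ] {n : ℕ} (hn : Fintype.card σ ≤ n) (r : σ → S) {p : MvPolynomial σ R}
    (hp : p.IsSymmetric) :
    aeval r p ∈ (aeval (R := R) fun j : Fin n => aeval r (esymm σ R (j + 1))).range := by
  obtain ⟨q, hq⟩ := esymmAlgHom_surjective R hn ⟨p, hp⟩
  refine ⟨q, ?_⟩
  have hpq : p = aeval (fun j : Fin n => esymm σ R (j + 1)) q := by
    rw [← esymmAlgHom_apply, hq]
  rw [hpq, ← AlgHom.comp_apply, comp_aeval]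
  rfl

theorem prod_X_add_C_coeff_card_sub {σ K S : Type*} [CommRing K] [CommRing S] [Algebra K S]
    [Fintype σ] (r : σ → S) {k : ℕ} (hk : k ≤ Fintype.card σ) :
    (∏ i, (Polynomial.X + Polynomial.C (r i))).coeff (Fintype.card σ - k) =
      aeval r (esymm σ K k) := by
  rw [aeval_esymm_eq_multiset_esymm, Finset.prod, Multiset.prod_X_add_C_coeff' _ _ (by simp),
    Finset.card_val, Finset.card_univ, Nat.sub_sub_self hk]

theorem exists_add_mul_of_mem_adjoin {K A : Type*} [CommSemiring K] [CommSemiring A]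
    [Algebra K A] {S : Subalgebra K A} {u : A} (hu : u ^ 2 ∈ S) {s : Set A}
    (hs : ∀ x ∈ s, ∃ a ∈ S, ∃ b ∈ S, x = a + b * u) {x : A} (hx : x ∈ Algebra.adjoin K s) :
    ∃ a ∈ S, ∃ b ∈ S, x = a + b * u := by
  induction hx using Algebra.adjoin_induction with
  | mem x hx => exact hs x hx
  | algebraMap r => exact ⟨_, S.algebraMap_mem r, 0, S.zero_mem, by simp⟩
  | add x y _ _ hx hy =>
    obtain ⟨a, ha, b, hb, rfl⟩ := hx
    obtain ⟨c, hc, e, he, rfl⟩ := hy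
    exact ⟨a + c, add_mem ha hc, b + e, add_mem hb he, by ring⟩
  | mul x y _ _ hx hy =>
    obtain ⟨a, ha, b, hb, rfl⟩ := hx
    obtain ⟨c, hc, e, he, rfl⟩ := hy
    exact ⟨a * c + b * e * u ^ 2, add_mem (mul_mem ha hc) (mul_mem (mul_mem hb he) hu),
      a * e + b * c, add_mem (mul_mem ha he) (mul_mem hb hc), by ring⟩

local notation "ξ" => (MvPolynomial.X 0 : MvPolynomial (Fin 2) ℂ)
local notation "η" => (MvPolynomial.X 1 : MvPolynomial (Fin 2) ℂ)

noncomputable def paramRoots (lam₁ lam₂ : ℕ) : Fin lam₁ ⊕ Fin lam₂ → MvPolynomial (Fin 2) ℂ :=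
  Sum.elim (fun _ => ξ) (fun _ => η)

-- `(λ₁ξ + λ₂η)/(λ₁ + λ₂)`, written so that it visibly specialises to `ξ` at `ξ = η`.
noncomputable def meanRoot (lam₁ lam₂ : ℕ) : MvPolynomial (Fin 2) ℂ :=
  ξ - C ((lam₂ : ℂ) / (lam₁ + lam₂)) * (ξ - η)

section

variable {lam₁ lam₂ : ℕ}

theorem paramPoly_eq_prod :
    paramPoly lam₁ lam₂ = ∏ i, (Polynomial.X + Polynomial.C (paramRoots lam₁ lam₂ i)) := by
  simp [paramPoly, paramRoots, Fintype.prod_sum_type]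

theorem qLam_eq_aeval_esymm :
    qLam (lam₁ + lam₂) lam₁ lam₂ =
      aeval fun j : Fin (lam₁ + lam₂) => aeval (paramRoots lam₁ lam₂) (esymm _ ℂ (j + 1)) := by
  unfold qLam
  congr 1
  funext j
  have hcard : Fintype.card (Fin lam₁ ⊕ Fin lam₂) = lam₁ + lam₂ := by simp
  rw [← prod_X_add_C_coeff_card_sub _ (hcard.symm ▸ j.2 : (j : ℕ) + 1 ≤ _), paramPoly_eq_prod,
    hcard]

theorem powerSum_mem_range_qLam (k : ℕ) :
    (lam₁ : MvPolynomial (Fin 2) ℂ) * ξ ^ k + lam₂ * η ^ k ∈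
      (qLam (lam₁ + lam₂) lam₁ lam₂).range := by
  have h := aeval_mem_range_aeval_esymm (R := ℂ) (n := lam₁ + lam₂) (by simp)
    (paramRoots lam₁ lam₂) (psum_isSymmetric _ ℂ k)
  rw [← qLam_eq_aeval_esymm] at h
  simpa [psum, paramRoots, Fintype.sum_sum_type] using h

theorem sub_sq_mem_range_qLam (h₁ : lam₁ ≠ 0) (h₂ : lam₂ ≠ 0) :
    (ξ - η) ^ 2 ∈ (qLam (lam₁ + lam₂) lam₁ lam₂).range := by
  have hc : ((lam₁ * lam₂ : ℕ) : ℂ) ≠ 0 := by positivity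
  refine (Submodule.smul_mem_iff
    (p := Subalgebra.toSubmodule (qLam (lam₁ + lam₂) lam₁ lam₂).range) hc).1 ?_
  set d : MvPolynomial (Fin 2) ℂ := lam₁ + lam₂
  set p : ℕ → MvPolynomial (Fin 2) ℂ := fun k => lam₁ * ξ ^ k + lam₂ * η ^ k
  have hp (k : ℕ) : p k ∈ (qLam (lam₁ + lam₂) lam₁ lam₂).range := powerSum_mem_range_qLam k
  have hd : d ∈ (qLam (lam₁ + lam₂) lam₁ lam₂).range :=
    add_mem (natCast_mem _ _) (natCast_mem _ _)
  have key : ((lam₁ * lam₂ : ℕ) : ℂ) • (ξ - η) ^ 2 = d * p 2 - p 1 ^ 2 := by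
    rw [Nat.cast_smul_eq_nsmul, nsmul_eq_mul]
    simp only [d, p]
    push_cast
    ring
  rw [Subalgebra.mem_toSubmodule, key]
  exact sub_mem (mul_mem hd (hp 2)) (pow_mem (hp 1) 2)

theorem sub_pow_three_mem_range_qLam (h₁ : lam₁ ≠ 0) (h₂ : lam₂ ≠ 0) (h : lam₂ ≠ lam₁) :
    (ξ - η) ^ 3 ∈ (qLam (lam₁ + lam₂) lam₁ lam₂).range := by
  have hc : ((lam₁ * lam₂ : ℂ) * (lam₂ - lam₁)) ≠ 0 := by
    have : (lam₂ : ℂ) - lam₁ ≠ 0 := sub_ne_zero.2 (by exact_mod_cast h)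
    positivity
  refine (Submodule.smul_mem_iff
    (p := Subalgebra.toSubmodule (qLam (lam₁ + lam₂) lam₁ lam₂).range) hc).1 ?_
  set d : MvPolynomial (Fin 2) ℂ := lam₁ + lam₂
  set p : ℕ → MvPolynomial (Fin 2) ℂ := fun k => lam₁ * ξ ^ k + lam₂ * η ^ k
  have hp (k : ℕ) : p k ∈ (qLam (lam₁ + lam₂) lam₁ lam₂).range := powerSum_mem_range_qLam k
  have hd : d ∈ (qLam (lam₁ + lam₂) lam₁ lam₂).range :=
    add_mem (natCast_mem _ _) (natCast_mem _ _)
  -- expand `d ^ k * p k = λ₁ (p 1 + λ₂ u) ^ k + λ₂ (p 1 - λ₁ u) ^ k` for `k ≤ 3`, `u = ξ - η`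
  have key : ((lam₁ * lam₂ : ℂ) * (lam₂ - lam₁)) • (ξ - η) ^ 3 =
      d ^ 2 * p 3 - 3 * d * p 1 * p 2 + 2 * p 1 ^ 3 := by
    rw [Algebra.smul_def]
    simp only [map_mul, map_sub, map_natCast, d, p]
    ring
  rw [Subalgebra.mem_toSubmodule, key]
  exact add_mem (sub_mem (mul_mem (pow_mem hd 2) (hp 3))
    (mul_mem (mul_mem (mul_mem (natCast_mem _ 3) hd) (hp 1)) (hp 2)))
    (mul_mem (natCast_mem _ 2) (pow_mem (hp 1) 3))

theorem sub_sq_mul_mem_range_qLam (h₁ : lam₁ ≠ 0) (h₂ : lam₂ ≠ 0) (h : lam₂ ≠ lam₁)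
    (g : MvPolynomial (Fin 2) ℂ) :
    (ξ - η) ^ 2 * g ∈ (qLam (lam₁ + lam₂) lam₁ lam₂).range := by
  set R := (qLam (lam₁ + lam₂) lam₁ lam₂).range
  set s : MvPolynomial (Fin 2) ℂ := lam₁ * ξ ^ 1 + lam₂ * η ^ 1
  have hs : s ∈ R := powerSum_mem_range_qLam 1
  have hinv : C ((lam₁ + lam₂ : ℂ)⁻¹) * (lam₁ + lam₂ : MvPolynomial (Fin 2) ℂ) = 1 := by
    rw [← map_natCast C, ← map_natCast C, ← map_add, ← map_mul,
      inv_mul_cancel₀ (by norm_cast; omega), map_one]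
  have hX : ∀ x ∈ Set.range (X : Fin 2 → MvPolynomial (Fin 2) ℂ),
      ∃ a ∈ R, ∃ b ∈ R, x = a + b * (ξ - η) := by
    rintro _ ⟨i, rfl⟩
    refine ⟨C (lam₁ + lam₂ : ℂ)⁻¹ * s, mul_mem (algebraMap_mem R _) hs, ?_⟩
    fin_cases i
    · refine ⟨C (lam₁ + lam₂ : ℂ)⁻¹ * (lam₂ : MvPolynomial (Fin 2) ℂ),
        mul_mem (algebraMap_mem R _) (natCast_mem R _), ?_⟩
      change ξ = _
      linear_combination (-ξ) * hinv
    · refine ⟨-C (lam₁ + lam₂ : ℂ)⁻¹ * (lam₁ : MvPolynomial (Fin 2) ℂ),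
        mul_mem (neg_mem (algebraMap_mem R _)) (natCast_mem R _), ?_⟩
      change η = _
      linear_combination (-η) * hinv
  obtain ⟨a, ha, b, hb, rfl⟩ := exists_add_mul_of_mem_adjoin (sub_sq_mem_range_qLam h₁ h₂) hX
    (adjoin_range_X (R := ℂ) (σ := Fin 2) ▸ Algebra.mem_top : g ∈ Algebra.adjoin ℂ _)
  have key : (ξ - η) ^ 2 * (a + b * (ξ - η)) = (ξ - η) ^ 2 * a + (ξ - η) ^ 3 * b := by ring
  rw [key]
  exact add_mem (mul_mem (sub_sq_mem_range_qLam h₁ h₂) ha)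
    (mul_mem (sub_pow_three_mem_range_qLam h₁ h₂ h) hb)

theorem paramPoly_map_mk (hd : lam₁ + lam₂ ≠ 0) {I : Ideal (MvPolynomial (Fin 2) ℂ)}
    (hI : (ξ - η) ^ 2 ∈ I) :
    (paramPoly lam₁ lam₂).map (Ideal.Quotient.mk I) =
      (Polynomial.X + Polynomial.C (Ideal.Quotient.mk I (meanRoot lam₁ lam₂))) ^ (lam₁ + lam₂) := by
  set π := Ideal.Quotient.mk I
  set φ : ℂ →+* Polynomial (MvPolynomial (Fin 2) ℂ ⧸ I) := Polynomial.C.comp (π.comp C)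
  set w := Polynomial.C (π (ξ - η))
  have hw : w ^ 2 = 0 := by
    rw [← map_pow, ← map_pow, Ideal.Quotient.eq_zero_iff_mem.2 hI, map_zero]
  have hdc : (lam₁ + lam₂ : ℂ) ≠ 0 := by norm_cast
  have hξ : ξ = meanRoot lam₁ lam₂ + C ((lam₂ : ℂ) / (lam₁ + lam₂)) * (ξ - η) := by
    rw [meanRoot]; ring
  have hη : η = meanRoot lam₁ lam₂ + C (-(lam₁ : ℂ) / (lam₁ + lam₂)) * (ξ - η) := by
    have : (-(lam₁ : ℂ) / (lam₁ + lam₂)) = (lam₂ : ℂ) / (lam₁ + lam₂) - 1 := by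
      field_simp; ring
    rw [meanRoot, this, map_sub, map_one]; ring
  set a := φ ((lam₂ : ℂ) / (lam₁ + lam₂))
  set b := φ (-(lam₁ : ℂ) / (lam₁ + lam₂))
  set y := Polynomial.X + Polynomial.C (π (meanRoot lam₁ lam₂))
  have hmn : lam₁ * a + lam₂ * b = 0 := by
    rw [← map_natCast φ, ← map_natCast φ, ← map_mul, ← map_mul, ← map_add]
    rw [show (lam₁ : ℂ) * (lam₂ / (lam₁ + lam₂)) + lam₂ * (-lam₁ / (lam₁ + lam₂)) = 0 by ring,
      map_zero]
  have hξ' : Polynomial.X + Polynomial.C (π ξ) = y + a * w := by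
    rw [hξ, map_add, map_add, add_assoc, map_mul, map_mul]; rfl
  have hη' : Polynomial.X + Polynomial.C (π η) = y + b * w := by
    rw [hη, map_add, map_add, add_assoc, map_mul, map_mul]; rfl
  rw [paramPoly, Polynomial.map_mul, Polynomial.map_pow, Polynomial.map_pow, Polynomial.map_add,
    Polynomial.map_add, Polynomial.map_X, Polynomial.map_C, Polynomial.map_C, hξ', hη']
  exact add_mul_pow_mul_add_mul_pow_of_sq_eq_zero y a b w hw hmn

theorem qLam_sub_aeval_qRNC_mem (hd : lam₁ + lam₂ ≠ 0) {I : Ideal (MvPolynomial (Fin 2) ℂ)}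
    (hI : (ξ - η) ^ 2 ∈ I) (f : MvPolynomial (Fin (lam₁ + lam₂)) ℂ) :
    qLam (lam₁ + lam₂) lam₁ lam₂ f -
      Polynomial.aeval (meanRoot lam₁ lam₂) (qRNC (lam₁ + lam₂) f) ∈ I := by
  refine Ideal.Quotient.eq.mp (DFunLike.congr_fun (?_ : (Ideal.Quotient.mkₐ ℂ I).comp
    (qLam (lam₁ + lam₂) lam₁ lam₂) = ((Ideal.Quotient.mkₐ ℂ I).comp
      (Polynomial.aeval (meanRoot lam₁ lam₂))).comp (qRNC (lam₁ + lam₂))) f)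
  refine MvPolynomial.algHom_ext fun j => ?_
  have hj : (j : ℕ) + 1 ≤ lam₁ + lam₂ := j.2
  simp only [AlgHom.comp_apply, qLam, qRNC, aeval_X, Ideal.Quotient.mkₐ_eq_mk, map_mul, map_pow,
    Polynomial.aeval_X, ← Polynomial.coeff_map, paramPoly_map_mk hd hI,
    Polynomial.coeff_X_add_C_pow, Nat.sub_sub_self hj, Nat.choose_symm hj, map_natCast]
  ring

theorem eq_zero_of_aeval_meanRoot_mem {p : Polynomial ℂ}
    (h : Polynomial.aeval (meanRoot lam₁ lam₂) p ∈ Ideal.span {(ξ - η) ^ 2}) : p = 0 := by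
  set δ : MvPolynomial (Fin 2) ℂ →ₐ[ℂ] Polynomial ℂ := aeval fun _ => Polynomial.X
  have hδ : δ (meanRoot lam₁ lam₂) = Polynomial.X := by simp [δ, meanRoot]
  obtain ⟨g, hg⟩ := Ideal.mem_span_singleton'.mp h
  rw [← Polynomial.aeval_X_left_apply p, ← hδ, Polynomial.aeval_algHom_apply, ← hg]
  simp [δ]

end

/-- For `λ = (λ₁,λ₂)` with `λ₁ > λ₂ ≥ 1` and `d = λ₁+λ₂`, the image under `q_λ` of the
ideal `I_{(d)} = ker q_{(d)}` is exactly the ideal generated by `(ξ−η)²`. -/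
theorem image_of_rnc_ideal (lam₁ lam₂ d : ℕ) (h₂ : 1 ≤ lam₂) (h₁ : lam₂ < lam₁)
    (hd : d = lam₁ + lam₂) :
    (qLam d lam₁ lam₂) '' (RingHom.ker (qRNC d) : Set (MvPolynomial (Fin d) ℂ)) =
      (Ideal.span {(MvPolynomial.X 0 - MvPolynomial.X 1 : MvPolynomial (Fin 2) ℂ) ^ 2} :
        Ideal (MvPolynomial (Fin 2) ℂ)) := by
  subst hd
  have hd : lam₁ + lam₂ ≠ 0 := by omega
  have hI := Ideal.mem_span_singleton_self ((ξ - η) ^ 2)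
  ext g
  constructor
  · rintro ⟨f, hf, rfl⟩
    simpa [RingHom.mem_ker.mp hf] using qLam_sub_aeval_qRNC_mem hd hI f
  · intro hg
    obtain ⟨u, rfl⟩ := Ideal.mem_span_singleton'.mp hg
    obtain ⟨f, hf⟩ := sub_sq_mul_mem_range_qLam (by omega) (by omega) h₁.ne u
    have hfI : qLam _ lam₁ lam₂ f ∈ Ideal.span {(ξ - η) ^ 2} := hf ▸ Ideal.mul_mem_right _ _ hI
    refine ⟨f, RingHom.mem_ker.mpr
      (eq_zero_of_aeval_meanRoot_mem (lam₁ := lam₁) (lam₂ := lam₂) ?_), hf.trans (mul_comm _ _)⟩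
    simpa using sub_mem hfI (qLam_sub_aeval_qRNC_mem hd hI f)
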